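/- arXiv:2409.05572 — 3 statements merged into one kernel-verified Lean document; each statement's English description precedes it below -/
import Mathlib

section
/- Let x ∈ ℂⁿ satisfy v₁*x ≠ 0 and x − v₁(v₁*x) ≠ 0, and set x̌ = (x − v₁(v₁*x))/‖x − v₁(v₁*x)‖₂. Then tan∠(A⁻¹x, v₁) / tan∠(x, v₁) = λ₁ · ‖A⁻¹x̌‖₂. (Proposition 3.1: the one-step convergence rate of the inverse power method.) -/
/-!
A symmetric operator `T` with eigenvector `u` for the real eigenvalue `a` scales the `u`-component
of every vector by `a` and maps the orthogonal residual `x - ⟪u, x⟫ u` to the residual of `T x`.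
Hence `tan∠(T x, u) = ‖T y‖ / (|a| ‖⟪u, x⟫‖)` with `y` the residual of `x`, and dividing by
`tan∠(x, u) = ‖y‖ / ‖⟪u, x⟫‖` leaves `‖T (y / ‖y‖)‖ / |a|`. For `T = A⁻¹` and `a = λ₁⁻¹` this is
the claimed rate.
-/

open scoped ComplexOrder

/-- The tangent of the angle between a nonzero vector `x` and a unit vector `v₁`:
`tan∠(x, v₁) = ‖x − v₁(v₁*x)‖₂ / |v₁*x|`. -/
noncomputable def tanAngle {m : ℕ} (v₁ x : EuclideanSpace ℂ (Fin m)) : ℝ :=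
  ‖x - (inner ℂ v₁ x : ℂ) • v₁‖ / ‖(inner ℂ v₁ x : ℂ)‖

namespace LinearMap.IsSymmetric

variable {𝕜 E : Type*} [RCLike 𝕜] [NormedAddCommGroup E] [InnerProductSpace 𝕜 E]
  {T : E →ₗ[𝕜] E} {u : E} {a : ℝ}

theorem inner_apply_of_apply_eq_smul (hT : T.IsSymmetric) (hu : T u = (a : 𝕜) • u) (x : E) :
    inner 𝕜 u (T x) = a * inner 𝕜 u x := by
  rw [← hT u x, hu, inner_smul_left, RCLike.conj_ofReal]

theorem apply_sub_inner_smul_of_apply_eq_smul (hT : T.IsSymmetric) (hu : T u = (a : 𝕜) • u)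
    (x : E) : T x - inner 𝕜 u (T x) • u = T (x - inner 𝕜 u x • u) := by
  rw [hT.inner_apply_of_apply_eq_smul hu, map_sub, map_smul, hu, smul_smul, mul_comm]

end LinearMap.IsSymmetric

section TanAngle

variable {m : ℕ} {T : EuclideanSpace ℂ (Fin m) →ₗ[ℂ] EuclideanSpace ℂ (Fin m)}
  {u : EuclideanSpace ℂ (Fin m)} {a : ℝ}

theorem tanAngle_apply_of_isSymmetric (hT : T.IsSymmetric) (hu : T u = (a : ℂ) • u)
    (x : EuclideanSpace ℂ (Fin m)) :
    tanAngle u (T x) = ‖T (x - inner ℂ u x • u)‖ / (|a| * ‖inner ℂ u x‖) := by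
  rw [tanAngle, hT.apply_sub_inner_smul_of_apply_eq_smul hu, hT.inner_apply_of_apply_eq_smul hu,
    norm_mul, RCLike.norm_ofReal]

theorem tanAngle_apply_div_tanAngle (hT : T.IsSymmetric) (hu : T u = (a : ℂ) • u)
    {x : EuclideanSpace ℂ (Fin m)} (hx : inner ℂ u x ≠ 0) :
    tanAngle u (T x) / tanAngle u x
      = ‖T ((‖x - inner ℂ u x • u‖ : ℂ)⁻¹ • (x - inner ℂ u x • u))‖ / |a| := by
  have hc : ‖inner ℂ u x‖ ≠ 0 := norm_ne_zero_iff.mpr hx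
  rw [tanAngle_apply_of_isSymmetric hT hu, tanAngle, map_smul, norm_smul, norm_inv,
    Complex.norm_real, norm_norm]
  field_simp

end TanAngle

theorem Matrix.toEuclideanLin_inv_apply_of_apply_eq_smul {𝕜 ι : Type*} [RCLike 𝕜] [Fintype ι]
    [DecidableEq ι] {A : Matrix ι ι 𝕜} (hA : IsUnit A.det) {w : EuclideanSpace 𝕜 ι} {μ : 𝕜}
    (hw : toEuclideanLin A w = μ • w) : toEuclideanLin A⁻¹ w = μ⁻¹ • w := by
  have hinv : μ • toEuclideanLin A⁻¹ w = w := by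
    rw [← map_smul, ← hw, ← LinearMap.comp_apply, ← toLpLin_mul_same, nonsing_inv_mul A hA,
      toLpLin_one, LinearMap.id_apply]
  rcases eq_or_ne μ 0 with rfl | hμ
  · obtain rfl : w = 0 := by simpa using hinv.symm
    simp
  · exact (eq_inv_smul_iff₀ hμ).mpr hinv

theorem inverse_power_one_step_rate_general {n : ℕ}
    (A : Matrix (Fin (n + 1)) (Fin (n + 1)) ℂ) (hA : A.PosDef)
    (μ : Fin (n + 1) → ℝ) (hμpos : ∀ i, 0 < μ i)
    (v : Fin (n + 1) → EuclideanSpace ℂ (Fin (n + 1)))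
    (hAv : ∀ i, Matrix.toEuclideanLin A (v i) = (μ i : ℂ) • v i)
    (x : EuclideanSpace ℂ (Fin (n + 1)))
    (hx1 : (inner ℂ (v 0) x : ℂ) ≠ 0) :
    tanAngle (v 0) (Matrix.toEuclideanLin A⁻¹ x) / tanAngle (v 0) x
      = μ 0 * ‖Matrix.toEuclideanLin A⁻¹
          ((‖x - (inner ℂ (v 0) x : ℂ) • v 0‖ : ℂ)⁻¹ • (x - (inner ℂ (v 0) x : ℂ) • v 0))‖ := by
  have hsymm : (Matrix.toEuclideanLin A⁻¹).IsSymmetric :=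
    Matrix.isSymmetric_toEuclideanLin_iff.mpr hA.isHermitian.inv
  have heig : Matrix.toEuclideanLin A⁻¹ (v 0) = (((μ 0)⁻¹ : ℝ) : ℂ) • v 0 := by
    rw [Matrix.toEuclideanLin_inv_apply_of_apply_eq_smul
      (A.isUnit_iff_isUnit_det.mp hA.isUnit) (hAv 0), Complex.ofReal_inv]
  rw [tanAngle_apply_div_tanAngle hsymm heig hx1, abs_inv, abs_of_pos (hμpos 0), div_inv_eq_mul,
    mul_comm]

/-- Proposition 3.1: the one-step convergence rate of the inverse power method.
If `A` is Hermitian positive definite with eigenvalues `0 < μ 0 ≤ μ 1 ≤ ⋯` and orthonormal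
eigenvectors `v i`, and `x` satisfies `v₁*x ≠ 0` and `x − v₁(v₁*x) ≠ 0`, then
`tan∠(A⁻¹x, v₁) / tan∠(x, v₁) = μ₁ ⬝ ‖A⁻¹ x̌‖` where `x̌` is the normalized component of `x`
orthogonal to `v₁`. -/
theorem inverse_power_one_step_rate {n : ℕ}
    (A : Matrix (Fin (n + 1)) (Fin (n + 1)) ℂ) (hA : A.PosDef)
    (μ : Fin (n + 1) → ℝ) (hμpos : ∀ i, 0 < μ i) (hμmono : Monotone μ)
    (v : Fin (n + 1) → EuclideanSpace ℂ (Fin (n + 1))) (hv : Orthonormal ℂ v)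
    (hAv : ∀ i, Matrix.toEuclideanLin A (v i) = (μ i : ℂ) • v i)
    (x : EuclideanSpace ℂ (Fin (n + 1)))
    (hx1 : (inner ℂ (v 0) x : ℂ) ≠ 0)
    (hx2 : x - (inner ℂ (v 0) x : ℂ) • v 0 ≠ 0) :
    tanAngle (v 0) (Matrix.toEuclideanLin A⁻¹ x) / tanAngle (v 0) x
      = μ 0 * ‖Matrix.toEuclideanLin A⁻¹
          ((‖x - (inner ℂ (v 0) x : ℂ) • v 0‖ : ℂ)⁻¹ • (x - (inner ℂ (v 0) x : ℂ) • v 0))‖ :=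
  inverse_power_one_step_rate_general A hA μ hμpos v hAv x hx1
end

section
/- Assume n ≥ 3 and λ₂ < λ₃. Let x⁰ = ξ₁v₁ + ξ₂v₂ + ⋯ + ξₙvₙ with ξ₂ ≠ 0, and for each integer j ≥ 0 set x^{(j)} = A^{−j}x⁰ and x̌^{(j)} = (x^{(j)} − v₁(v₁*x^{(j)}))/‖x^{(j)} − v₁(v₁*x^{(j)})‖₂ (which is well defined since ξ₂ ≠ 0). Then lim_{j→∞} λ₁‖A⁻¹x̌^{(j)}‖₂ = λ₁/λ₂; that is, the per-step convergence rate of inverse iteration tends to the asymptotic rate λ₁/λ₂. -/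
/-!
Removing the `v₁` component of `x⁽ʲ⁾` leaves `wⱼ = A⁻ʲ ∑_{i ≥ 2} ξᵢ vᵢ`, so `A⁻¹ wⱼ = wⱼ₊₁` and
`λ₁ ‖A⁻¹ x̌⁽ʲ⁾‖ = λ₁ ‖wⱼ₊₁‖ / ‖wⱼ‖`. On that subspace the eigenvalue `λ₂⁻¹` of `A⁻¹` strictly
dominates the others, so the power method gives `λ₂ʲ wⱼ → ξ₂ v₂ ≠ 0`, and the ratio of
consecutive norms tends to `1/λ₂`. Indices are 0-based in Lean: `μ 0, μ 1, μ 2` are `λ₁, λ₂, λ₃`.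
-/

open scoped ComplexOrder
open Filter Topology Finset Matrix

lemma Matrix.toEuclideanLin_inv_apply_of_eq_smul {𝕜 ι : Type*} [RCLike 𝕜] [Fintype ι]
    [DecidableEq ι] {M : Matrix ι ι 𝕜} (hM : IsUnit M.det) {x : EuclideanSpace 𝕜 ι} {c : 𝕜}
    (hc : c ≠ 0) (h : toEuclideanLin M x = c • x) :
    toEuclideanLin M⁻¹ x = c⁻¹ • x :=
  calc toEuclideanLin M⁻¹ x = c⁻¹ • toEuclideanLin M⁻¹ (c • x) := by
        rw [map_smul, inv_smul_smul₀ hc]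
    _ = c⁻¹ • toEuclideanLin (M⁻¹ * M) x := by rw [← h, toLpLin_mul_same, LinearMap.comp_apply]
    _ = c⁻¹ • x := by simp [nonsing_inv_mul M hM]

lemma Module.End.pow_apply_sum_smul {R M ι : Type*} [CommSemiring R] [AddCommMonoid M]
    [Module R M] {f : Module.End R M} {v : ι → M} {c : ι → R} (hf : ∀ i, f (v i) = c i • v i)
    (s : Finset ι) (ξ : ι → R) (j : ℕ) :
    (f ^ j) (∑ i ∈ s, ξ i • v i) = ∑ i ∈ s, (c i ^ j * ξ i) • v i := by
  induction j with
  | zero => simp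
  | succ j ih =>
    rw [pow_succ', Module.End.mul_apply, ih, map_sum]
    refine sum_congr rfl fun i _ => ?_
    rw [map_smul, hf, smul_smul, pow_succ', mul_comm, mul_assoc]

lemma Orthonormal.sum_sub_inner_smul {𝕜 E ι : Type*} [RCLike 𝕜] [NormedAddCommGroup E]
    [InnerProductSpace 𝕜 E] [Fintype ι] [DecidableEq ι] {v : ι → E} (hv : Orthonormal 𝕜 v)
    (c : ι → 𝕜) (k : ι) :
    ∑ i, c i • v i - inner 𝕜 (v k) (∑ i, c i • v i) • v k = ∑ i ∈ univ.erase k, c i • v i := by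
  rw [hv.inner_right_fintype, ← add_sum_erase _ _ (mem_univ k), add_sub_cancel_left]

section Limits

variable {𝕜 E : Type*} [NormedField 𝕜] [NormedAddCommGroup E] [NormedSpace 𝕜 E]

lemma tendsto_sum_pow_smul_of_norm_lt_one {ι : Type*} [DecidableEq ι] {s : Finset ι} {i₀ : ι}
    (hi₀ : i₀ ∈ s) {q : ι → 𝕜} (hq₀ : q i₀ = 1) (hq : ∀ i ∈ s, i ≠ i₀ → ‖q i‖ < 1)
    (a : ι → E) :
    Tendsto (fun j : ℕ => ∑ i ∈ s, q i ^ j • a i) atTop (𝓝 (a i₀)) := by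
  rw [show a i₀ = ∑ i ∈ s, if i = i₀ then a i else 0 by simp [hi₀]]
  refine tendsto_finsetSum s fun i hi => ?_
  by_cases h : i = i₀
  · subst h
    simp [hq₀]
  · simpa [h] using (tendsto_pow_atTop_nhds_zero_of_norm_lt_one (hq i hi h)).smul_const (a i)

lemma Module.End.tendsto_inv_pow_smul_pow_apply_sum {ι : Type*} [DecidableEq ι]
    {f : Module.End 𝕜 E} {v : ι → E} {c : ι → 𝕜} (hf : ∀ i, f (v i) = c i • v i)
    {s : Finset ι} {i₀ : ι} (hi₀ : i₀ ∈ s) (hc₀ : c i₀ ≠ 0)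
    (hc : ∀ i ∈ s, i ≠ i₀ → ‖c i‖ < ‖c i₀‖) (ξ : ι → 𝕜) :
    Tendsto (fun j : ℕ => (c i₀)⁻¹ ^ j • (f ^ j) (∑ i ∈ s, ξ i • v i)) atTop
      (𝓝 (ξ i₀ • v i₀)) := by
  have hscaled : ∀ j : ℕ, (c i₀)⁻¹ ^ j • (f ^ j) (∑ i ∈ s, ξ i • v i)
      = ∑ i ∈ s, (c i / c i₀) ^ j • (ξ i • v i) := fun j => by
    rw [f.pow_apply_sum_smul hf, smul_sum]
    refine sum_congr rfl fun i _ => ?_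
    rw [smul_smul, smul_smul, div_eq_inv_mul, mul_pow, mul_assoc]
  simp only [hscaled]
  refine tendsto_sum_pow_smul_of_norm_lt_one hi₀ (div_self hc₀) (fun i hi hne => ?_) _
  rw [norm_div, div_lt_one (norm_pos_iff.2 hc₀)]
  exact hc i hi hne

lemma tendsto_norm_succ_div_norm_of_tendsto_pow_smul {u : ℕ → E} {c : 𝕜} {a : E} (hc : c ≠ 0)
    (ha : a ≠ 0) (h : Tendsto (fun j => c ^ j • u j) atTop (𝓝 a)) :
    Tendsto (fun j => ‖u (j + 1)‖ / ‖u j‖) atTop (𝓝 ‖c‖⁻¹) := by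
  have hc' : ‖c‖ ≠ 0 := norm_ne_zero_iff.2 hc
  have hratio : ∀ j, ‖u (j + 1)‖ / ‖u j‖
      = ‖c‖⁻¹ * (‖c ^ (j + 1) • u (j + 1)‖ / ‖c ^ j • u j‖) := fun j => by
    rw [norm_smul, norm_smul, norm_pow, norm_pow, pow_succ, mul_assoc,
      mul_div_mul_left _ _ (pow_ne_zero j hc'), mul_div_assoc, inv_mul_cancel_left₀ hc']
  have hlim := ((h.norm.comp (tendsto_add_atTop_nat 1)).div h.norm
    (norm_ne_zero_iff.2 ha)).const_mul ‖c‖⁻¹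
  rw [div_self (norm_ne_zero_iff.2 ha), mul_one] at hlim
  exact hlim.congr fun j => (hratio j).symm

end Limits

lemma Fin.two_le_of_ne_zero_of_ne_one {n : ℕ} {i : Fin (n + 3)} (h0 : i ≠ 0) (h1 : i ≠ 1) :
    2 ≤ i := by
  rw [Fin.le_iff_val_le_val]
  simp only [ne_eq, Fin.ext_iff, Fin.val_zero, Fin.val_one] at h0 h1
  simp only [Fin.val_two]
  omega

/-- The per-step convergence rate of inverse iteration tends to the asymptotic rate `λ₁/λ₂`:
if `λ₂ < λ₃` and `x⁰ = ∑ ξᵢ vᵢ` with `ξ₂ ≠ 0`, setting `x⁽ʲ⁾ = A⁻ʲ x⁰` and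
`x̌⁽ʲ⁾ = (x⁽ʲ⁾ − v₁(v₁*x⁽ʲ⁾))/‖x⁽ʲ⁾ − v₁(v₁*x⁽ʲ⁾)‖`, one has
`lim_{j→∞} λ₁ ‖A⁻¹ x̌⁽ʲ⁾‖ = λ₁/λ₂`. -/
theorem inverse_iteration_rate_tendsto_asymptotic {n : ℕ}
    (A : Matrix (Fin (n + 3)) (Fin (n + 3)) ℂ) (hA : A.PosDef)
    (μ : Fin (n + 3) → ℝ) (hμpos : ∀ i, 0 < μ i) (hμmono : Monotone μ)
    (hμ23 : μ 1 < μ 2)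
    (v : Fin (n + 3) → EuclideanSpace ℂ (Fin (n + 3))) (hv : Orthonormal ℂ v)
    (hAv : ∀ i, Matrix.toEuclideanLin A (v i) = (μ i : ℂ) • v i)
    (ξ : Fin (n + 3) → ℂ) (hξ₂ : ξ 1 ≠ 0)
    (x₀ : EuclideanSpace ℂ (Fin (n + 3))) (hx₀ : x₀ = ∑ i, ξ i • v i)
    (xj w xc : ℕ → EuclideanSpace ℂ (Fin (n + 3)))
    (hxj : ∀ j, xj j = Matrix.toEuclideanLin (A⁻¹ ^ j) x₀)
    (hw : ∀ j, w j = xj j - (inner ℂ (v 0) (xj j) : ℂ) • v 0)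
    (hxc : ∀ j, xc j = (‖w j‖ : ℂ)⁻¹ • w j) :
    Filter.Tendsto (fun j : ℕ => μ 0 * ‖Matrix.toEuclideanLin A⁻¹ (xc j)‖)
      Filter.atTop (nhds (μ 0 / μ 1)) := by
  have hμne : ∀ i, (μ i : ℂ) ≠ 0 := fun i => Complex.ofReal_ne_zero.2 (hμpos i).ne'
  have hAinv : ∀ i, toEuclideanLin A⁻¹ (v i) = (μ i : ℂ)⁻¹ • v i := fun i =>
    toEuclideanLin_inv_apply_of_eq_smul ((isUnit_iff_isUnit_det _).1 hA.isUnit) (hμne i) (hAv i)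
  have hw_eq : ∀ j, w j = (toEuclideanLin A⁻¹ ^ j) (∑ i ∈ univ.erase 0, ξ i • v i) := fun j => by
    rw [hw, hxj, hx₀, toLpLin_pow, Module.End.pow_apply_sum_smul hAinv,
      hv.sum_sub_inner_smul, Module.End.pow_apply_sum_smul hAinv]
  have hstep : ∀ j, toEuclideanLin A⁻¹ (w j) = w (j + 1) := fun j => by
    rw [hw_eq, hw_eq, pow_succ', Module.End.mul_apply]
  have hdominant : ∀ i ∈ univ.erase 0, i ≠ 1 → ‖(μ i : ℂ)⁻¹‖ < ‖(μ 1 : ℂ)⁻¹‖ := by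
    intro i hi h1
    have h2 : μ 2 ≤ μ i := hμmono (Fin.two_le_of_ne_zero_of_ne_one (ne_of_mem_erase hi) h1)
    simp only [norm_inv, Complex.norm_real, Real.norm_of_nonneg (hμpos _).le]
    exact inv_strictAnti₀ (hμpos 1) (hμ23.trans_le h2)
  have hscaled : Tendsto (fun j => (μ 1 : ℂ) ^ j • w j) atTop (𝓝 (ξ 1 • v 1)) := by
    simpa only [inv_inv, ← hw_eq] using Module.End.tendsto_inv_pow_smul_pow_apply_sum hAinv
      (mem_erase.2 ⟨one_ne_zero, mem_univ _⟩) (inv_ne_zero (hμne 1)) hdominant ξ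
  have hrate : ∀ j, μ 0 * ‖toEuclideanLin A⁻¹ (xc j)‖ = μ 0 * (‖w (j + 1)‖ / ‖w j‖) := by
    intro j
    rw [hxc, map_smul, hstep, norm_smul, norm_inv, Complex.norm_real, norm_norm, inv_mul_eq_div]
  have hlim := (tendsto_norm_succ_div_norm_of_tendsto_pow_smul (hμne 1)
    (smul_ne_zero hξ₂ (hv.ne_zero 1)) hscaled).const_mul (μ 0)
  rwa [Complex.norm_real, Real.norm_of_nonneg (hμpos 1).le, ← div_eq_mul_inv,
    ← funext hrate] at hlim
end

section
/- (Theorem 5.1, one-step convergence rate of subspace iteration.) With B, V, X and the block decomposition X_k, X_{l∖k}, X_l^⊥ as in the context (X*X = I_k and X_k nonsingular), one has ‖[Σ_{l∖k}X_{l∖k}; Σ_l^⊥X_l^⊥] X_k^{−1} Σ_k^{−1}‖₂ ≤ (σ_{l+1}/σ_k) · ‖[X_{l∖k}; X_l^⊥] X_k^{−1}‖₂ + ((σ_{k+1} − σ_{l+1})/σ_k) · ‖X_{l∖k} X_k^{−1}‖₂. Equivalently, since tan∠(V_k, X) = ‖[X_{l∖k}; X_l^⊥] X_k^{−1}‖₂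 and tan∠(V_k, BX) = ‖[Σ_{l∖k}X_{l∖k}; Σ_l^⊥X_l^⊥] X_k^{−1}Σ_k^{−1}‖₂, the convergence rate satisfies tan∠(V_k, BX)/tan∠(V_k, X) ≤ σ_{l+1}/σ_k + ((σ_{k+1} − σ_{l+1})/σ_k) · ‖X_{l∖k}X_k^{−1}‖₂ / ‖[X_{l∖k}; X_l^⊥]X_k^{−1}‖₂. -/
open scoped Matrix Matrix.Norms.L2Operator

/-- Embedding of the middle block `{k+1, …, l}` (0-based: `k, …, l−1`) into `Fin n`. -/
def midEmb (k l n : ℕ) (h : l ≤ n) : Fin (l - k) → Fin n :=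
  fun i => ⟨k + i.1, by have := i.2; omega⟩

/-- Embedding of the tail block `{l+1, …, n}` (0-based: `l, …, n−1`) into `Fin n`. -/
def highEmb (l n : ℕ) : Fin (n - l) → Fin n :=
  fun i => ⟨l + i.1, by have := i.2; omega⟩

/-! Shifting the middle block by `σ_{l+1}` splits the numerator as
`[Σ_{l∖k}X_{l∖k}; Σ_l^⊥X_l^⊥]
  = [(Σ_{l∖k} − σ_{l+1})X_{l∖k}; 0] + diag(σ_{l+1}, Σ_l^⊥) [X_{l∖k}; X_l^⊥]`.
The two diagonal factors have spectral norm at most `σ_{k+1} − σ_{l+1}` and `σ_{l+1}`, a zero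
block does not change the spectral norm, and `‖Σ_k⁻¹‖ ≤ 1/σ_k`; the triangle inequality and
submultiplicativity give the bound, and dividing by `‖[X_{l∖k}; X_l^⊥] X_k⁻¹‖` gives the rate. -/

namespace Matrix

section

variable {R m₁ m₂ p : Type*} [Ring R] [Fintype m₁] [Fintype m₂]

lemma fromRows_mul_eq_fromRows_sub_add_fromBlocks_mul (D₁ E : Matrix m₁ m₁ R)
    (D₂ : Matrix m₂ m₂ R) (A : Matrix m₁ p R) (C : Matrix m₂ p R) :
    fromRows (D₁ * A) (D₂ * C) =
      fromRows ((D₁ - E) * A) 0 + fromBlocks E 0 0 D₂ * fromRows A C := by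
  ext (i | i) j <;> simp [fromBlocks_mul_fromRows, Matrix.sub_mul]

end

variable {𝕜 ι m₁ m₂ p q : Type*} [RCLike 𝕜] [Fintype ι] [DecidableEq ι] [Fintype m₁] [Fintype m₂]
  [Fintype p] [Fintype q]

lemma l2_opNorm_diagonal_le {d : ι → 𝕜} {c : ℝ} (hc : 0 ≤ c) (h : ∀ i, ‖d i‖ ≤ c) :
    ‖diagonal d‖ ≤ c := by
  rw [l2_opNorm_diagonal]
  exact (pi_norm_le_iff_of_nonneg hc).2 h

lemma l2_opNorm_inv_diagonal_le {d : ι → ℝ} {a : ℝ} (ha : 0 < a) (h : ∀ i, a ≤ d i) :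
    ‖(diagonal fun i => (d i : 𝕜))⁻¹‖ ≤ a⁻¹ := by
  have hd : ∀ i, (d i : 𝕜) ≠ 0 := fun i => RCLike.ofReal_ne_zero.2 (ha.trans_le (h i)).ne'
  rw [inv_eq_right_inv (B := diagonal fun i => (d i : 𝕜)⁻¹) (by simp [hd])]
  refine l2_opNorm_diagonal_le (inv_nonneg.2 ha.le) fun i => ?_
  rw [norm_inv, RCLike.norm_ofReal, abs_of_pos (ha.trans_le (h i))]
  exact inv_anti₀ ha (h i)

lemma l2_opNorm_fromRows_zero [DecidableEq p] (A : Matrix m₁ p 𝕜) :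
    ‖fromRows A (0 : Matrix m₂ p 𝕜)‖ = ‖A‖ := by
  have h := l2_opNorm_conjTranspose_mul_self (fromRows A (0 : Matrix m₂ p 𝕜))
  rw [conjTranspose_fromRows_eq_fromCols_conjTranspose, fromCols_mul_fromRows,
    conjTranspose_zero, Matrix.mul_zero, add_zero, l2_opNorm_conjTranspose_mul_self] at h
  exact (mul_self_inj (norm_nonneg _) (norm_nonneg _)).1 h.symm

variable [DecidableEq m₁] [DecidableEq m₂] [DecidableEq q]

lemma l2_opNorm_fromRows_diagonal_mul_mul_le {d₁ : m₁ → 𝕜} {d₂ : m₂ → 𝕜} {c : 𝕜} {δ : ℝ}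
    (hδ : 0 ≤ δ) (h₁ : ∀ i, ‖d₁ i - c‖ ≤ δ) (h₂ : ∀ i, ‖d₂ i‖ ≤ ‖c‖)
    (A : Matrix m₁ p 𝕜) (C : Matrix m₂ p 𝕜) (M : Matrix p q 𝕜) :
    ‖fromRows (diagonal d₁ * A) (diagonal d₂ * C) * M‖
      ≤ ‖c‖ * ‖fromRows A C * M‖ + δ * ‖A * M‖ := by
  have hshift : ‖diagonal d₁ - diagonal fun _ : m₁ => c‖ ≤ δ := by
    rw [diagonal_sub]
    exact l2_opNorm_diagonal_le hδ h₁
  have hblock : ‖fromBlocks (diagonal fun _ : m₁ => c) 0 0 (diagonal d₂)‖ ≤ ‖c‖ := by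
    rw [fromBlocks_diagonal]
    exact l2_opNorm_diagonal_le (norm_nonneg c) fun | .inl _ => le_rfl | .inr i => h₂ i
  rw [fromRows_mul_eq_fromRows_sub_add_fromBlocks_mul _ (diagonal fun _ : m₁ => c),
    Matrix.add_mul, fromRows_mul, Matrix.zero_mul, Matrix.mul_assoc, Matrix.mul_assoc]
  calc _ ≤ ‖fromRows ((diagonal d₁ - diagonal fun _ => c) * (A * M)) (0 : Matrix m₂ q 𝕜)‖
        + ‖fromBlocks (diagonal fun _ => c) 0 0 (diagonal d₂) * (fromRows A C * M)‖ :=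
        norm_add_le _ _
    _ ≤ δ * ‖A * M‖ + ‖c‖ * ‖fromRows A C * M‖ := by
        rw [l2_opNorm_fromRows_zero]
        gcongr
        · exact (l2_opNorm_mul _ _).trans (by gcongr)
        · exact (l2_opNorm_mul _ _).trans (by gcongr)
    _ = _ := add_comm _ _

end Matrix

lemma div_le_add_mul_div {x c r N D : ℝ} (hc : 0 ≤ c) (hD : 0 ≤ D) (h : x ≤ c * D + r * N) :
    x / D ≤ c + r * (N / D) := by
  rcases hD.eq_or_lt with rfl | hD
  · simpa using hc -- `x / 0 = 0`
  · rw [div_le_iff₀ hD, add_mul, mul_assoc, div_mul_cancel₀ _ hD.ne']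
    linarith

theorem subspace_iteration_one_step_rate {n k l : ℕ}
    (hkl : k < l) (hln : l < n)
    (σ : Fin n → ℝ) (hσpos : ∀ i, 0 < σ i) (hσ : Antitone σ)
    (Xk : Matrix (Fin k) (Fin k) ℂ)
    (Xlk : Matrix (Fin (l - k)) (Fin k) ℂ)
    (Xlp : Matrix (Fin (n - l)) (Fin k) ℂ) :
    ‖Matrix.fromRows
        (Matrix.diagonal (fun i => (σ (midEmb k l n hln.le i) : ℂ)) * Xlk)
        (Matrix.diagonal (fun i => (σ (highEmb l n i) : ℂ)) * Xlp) *
        (Xk⁻¹ * (Matrix.diagonal (fun i : Fin k => (σ (Fin.castLE (show k ≤ n by omega) i) : ℂ)))⁻¹)‖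
      ≤ σ ⟨l, hln⟩ / σ ⟨k - 1, by omega⟩ * ‖Matrix.fromRows Xlk Xlp * Xk⁻¹‖
        + (σ ⟨k, by omega⟩ - σ ⟨l, hln⟩) / σ ⟨k - 1, by omega⟩ * ‖Xlk * Xk⁻¹‖
    ∧ ‖Matrix.fromRows
        (Matrix.diagonal (fun i => (σ (midEmb k l n hln.le i) : ℂ)) * Xlk)
        (Matrix.diagonal (fun i => (σ (highEmb l n i) : ℂ)) * Xlp) *
        (Xk⁻¹ * (Matrix.diagonal (fun i : Fin k => (σ (Fin.castLE (show k ≤ n by omega) i) : ℂ)))⁻¹)‖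
        / ‖Matrix.fromRows Xlk Xlp * Xk⁻¹‖
      ≤ σ ⟨l, hln⟩ / σ ⟨k - 1, by omega⟩
        + (σ ⟨k, by omega⟩ - σ ⟨l, hln⟩) / σ ⟨k - 1, by omega⟩
          * (‖Xlk * Xk⁻¹‖ / ‖Matrix.fromRows Xlk Xlp * Xk⁻¹‖) := by
  have hσl : σ ⟨l, hln⟩ ≤ σ ⟨k, by omega⟩ := hσ (Fin.mk_le_mk.2 hkl.le)
  have hmid (i : Fin (l - k)) : ‖(σ (midEmb k l n hln.le i) : ℂ) - σ ⟨l, hln⟩‖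
      ≤ σ ⟨k, by omega⟩ - σ ⟨l, hln⟩ := by
    have hlo : σ ⟨l, hln⟩ ≤ σ (midEmb k l n hln.le i) := hσ (Fin.mk_le_mk.2 (by omega))
    have hhi : σ (midEmb k l n hln.le i) ≤ σ ⟨k, by omega⟩ := hσ (Fin.mk_le_mk.2 (by omega))
    rw [← Complex.ofReal_sub, Complex.norm_real, Real.norm_of_nonneg (sub_nonneg.2 hlo)]
    linarith
  have hhigh (i : Fin (n - l)) : ‖(σ (highEmb l n i) : ℂ)‖ ≤ ‖(σ ⟨l, hln⟩ : ℂ)‖ := by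
    rw [Complex.norm_real, Complex.norm_real, Real.norm_of_nonneg (hσpos _).le,
      Real.norm_of_nonneg (hσpos _).le]
    exact hσ (Fin.mk_le_mk.2 (Nat.le_add_right _ _))
  have hrate := Matrix.l2_opNorm_fromRows_diagonal_mul_mul_le (sub_nonneg.2 hσl) hmid hhigh
    Xlk Xlp Xk⁻¹
  rw [Complex.norm_real, Real.norm_of_nonneg (hσpos _).le] at hrate
  have hscale : ‖(Matrix.diagonal fun i : Fin k => (σ (Fin.castLE (show k ≤ n by omega) i) : ℂ))⁻¹‖
      ≤ (σ ⟨k - 1, by omega⟩)⁻¹ :=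
    Matrix.l2_opNorm_inv_diagonal_le (hσpos _) fun i => hσ (Fin.mk_le_mk.2 (by omega))
  refine (fun h => ⟨h, div_le_add_mul_div (div_nonneg (hσpos _).le (hσpos _).le)
    (norm_nonneg _) h⟩) ?_
  calc _ ≤ _ * _ := by rw [← Matrix.mul_assoc]; exact Matrix.l2_opNorm_mul _ _
    _ ≤ (σ ⟨l, hln⟩ * ‖Matrix.fromRows Xlk Xlp * Xk⁻¹‖
          + (σ ⟨k, by omega⟩ - σ ⟨l, hln⟩) * ‖Xlk * Xk⁻¹‖) * (σ ⟨k - 1, by omega⟩)⁻¹ :=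
        mul_le_mul hrate hscale (norm_nonneg _) (by have := hσpos ⟨l, hln⟩; positivity)
    _ = _ := by ring
end
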